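/- In the 4-node Kripke model consisting of two disjoint chains a < b and c < d with b forcing only p and d forcing only q, every formula θ built from p, q, ⊤ using only ¬ and → satisfies: if both b and d force θ, then a forces θ or c forces θ. Consequently b and d force p ∨ q but no node among a, c does, so p ∨ q is not equivalent to any {¬, →, ⊤}-formula in Gödel–Dummett logic. -/

import Mathlib

inductive Fm (α : Type) : Type where
  | top  : Fm α
  | atom : α → Fm α
  | neg  : Fm α → Fm α
  | and  : Fm α → Fm α → Fm α
  | or   : Fm α → Fm α → Fm α
  | imp  : Fm α → Fm α → Fm α

structure KripkeModel (α : Type) : Type 1 where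
  K : Type
  le : K → K → Prop
  refl : ∀ k, le k k
  trans : ∀ {a b c}, le a b → le b c → le a c
  antisymm : ∀ {a b}, le a b → le b a → a = b
  val : K → α → Prop
  persist : ∀ {k k' p}, le k k' → val k p → val k' p

def force {α : Type} (M : KripkeModel α) : M.K → Fm α → Prop
  | _, .top => True
  | k, .atom p => M.val k p
  | k, .neg φ => ∀ k', M.le k k' → ¬ force M k' φ
  | k, .and φ ψ => force M k φ ∧ force M k ψ
  | k, .or φ ψ => force M k φ ∨ force M k ψ
  | k, .imp φ ψ => ∀ k', M.le k k' → force M k' φ → force M k' ψ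

/-- Formulas built from atoms and ⊤ using only ¬ and →. -/
def OnlyNegImp {α : Type} : Fm α → Prop
  | .top => True
  | .atom _ => True
  | .neg φ => OnlyNegImp φ
  | .and _ _ => False
  | .or _ _ => False
  | .imp φ ψ => OnlyNegImp φ ∧ OnlyNegImp ψ

/-- The 4-node Kripke model consisting of two disjoint chains a = 0 < b = 1 and
c = 2 < d = 3, where b forces only the atom p = 0 and d forces only q = 1. -/
def M16 : KripkeModel (Fin 2) where
  K := Fin 4
  le := fun x y => x = y ∨ (x = 0 ∧ y = 1) ∨ (x = 2 ∧ y = 3)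
  refl := by decide
  trans := by decide
  antisymm := by decide
  val := fun k p => (k = 1 ∧ p = 0) ∨ (k = 3 ∧ p = 1)
  persist := by decide

/-- A Kripke model is connected when any two nodes above a common node are
comparable. -/
def Connected {α : Type} (M : KripkeModel α) : Prop :=
  ∀ k k' k'' : M.K, M.le k k' → M.le k k'' → M.le k' k'' ∨ M.le k'' k'

/-!
If the only node above `a` is `b`, then `a` forces `¬φ` as soon as `b` does, and `a` forces
`φ → ψ` as soon as `b` does and `a` itself satisfies it locally. So in a model containing two
such chains `a < b` and `c < d` whose tops share no atom, a `{¬, →, ⊤}`-formula `θ` forced at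
`b` and `d` but at neither `a` nor `c` must be an implication `φ → ψ` with `φ` forced and `ψ`
unforced at `a` and at `c`; then `ψ` is forced at `b` and `d`, and induction on `ψ` gives a
contradiction.
-/

section Kripke

variable {α : Type} (M : KripkeModel α)

theorem force_mono {k k' : M.K} (h : M.le k k') : ∀ φ, force M k φ → force M k' φ
  | .top, _ => trivial
  | .atom _, hf => M.persist h hf
  | .neg _, hf => fun k'' hle => hf k'' (M.trans h hle)
  | .and φ ψ, hf => ⟨force_mono h φ hf.1, force_mono h ψ hf.2⟩
  | .or φ ψ, hf => hf.imp (force_mono h φ) (force_mono h ψ)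
  | .imp _ _, hf => fun k'' hle => hf k'' (M.trans h hle)

def UpsetIsPair (a b : M.K) : Prop :=
  M.le a b ∧ ∀ k, M.le a k → k = a ∨ k = b

variable {M} {a b : M.K}

theorem UpsetIsPair.force_neg (h : UpsetIsPair M a b) {φ : Fm α}
    (hb : force M b (.neg φ)) : force M a (.neg φ) := by
  intro k hak hk
  rcases h.2 k hak with rfl | rfl
  · exact hb b (M.refl b) (force_mono M h.1 φ hk)
  · exact hb k (M.refl k) hk

theorem UpsetIsPair.force_imp (h : UpsetIsPair M a b) {φ ψ : Fm α}
    (ha : force M a φ → force M a ψ) (hb : force M b (.imp φ ψ)) :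
    force M a (.imp φ ψ) := by
  intro k hak hk
  rcases h.2 k hak with rfl | rfl
  · exact ha hk
  · exact hb k (M.refl k) hk

theorem UpsetIsPair.force_or_force {c d : M.K} (hab : UpsetIsPair M a b)
    (hcd : UpsetIsPair M c d) (hval : ∀ p, M.val b p → ¬ M.val d p) :
    ∀ θ : Fm α, OnlyNegImp θ → force M b θ → force M d θ → force M a θ ∨ force M c θ
  | .top, _, _, _ => Or.inl trivial
  | .atom p, _, hb, hd => absurd hd (hval p hb)
  | .neg _, _, hb, _ => Or.inl (hab.force_neg hb)
  | .imp φ ψ, hθ, hb, hd => by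
    by_cases ha : force M a φ → force M a ψ
    · exact Or.inl (hab.force_imp ha hb)
    by_cases hc : force M c φ → force M c ψ
    · exact Or.inr (hcd.force_imp hc hd)
    push Not at ha hc
    -- Both `a` and `c` force `φ` but not `ψ`; pushing `φ` up to `b` and `d` forces `ψ` there.
    have hbψ := hb b (M.refl b) (force_mono M hab.1 φ ha.1)
    have hdψ := hd d (M.refl d) (force_mono M hcd.1 φ hc.1)
    exact (UpsetIsPair.force_or_force hab hcd hval ψ hθ.2 hbψ hdψ).elim
      (absurd · ha.2) (absurd · hc.2)

end Kripke

theorem M16_upsetIsPair_zero_one : UpsetIsPair M16 (0 : Fin 4) (1 : Fin 4) := by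
  unfold UpsetIsPair M16; decide

theorem M16_upsetIsPair_two_three : UpsetIsPair M16 (2 : Fin 4) (3 : Fin 4) := by
  unfold UpsetIsPair M16; decide

theorem M16_val_one_disjoint_three : ∀ p, M16.val (1 : Fin 4) p → ¬ M16.val (3 : Fin 4) p := by
  unfold M16; decide

theorem M16_connected : Connected M16 := by
  unfold Connected M16; decide

theorem M16_force_or_atoms :
    force M16 (1 : Fin 4) (.or (.atom 0) (.atom 1)) ∧
    force M16 (3 : Fin 4) (.or (.atom 0) (.atom 1)) ∧
    ¬ force M16 (0 : Fin 4) (.or (.atom 0) (.atom 1)) ∧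
    ¬ force M16 (2 : Fin 4) (.or (.atom 0) (.atom 1)) := by
  simp only [force]; unfold M16; decide

theorem or_not_definable_from_neg_imp :
    (∀ θ : Fm (Fin 2), OnlyNegImp θ →
        force M16 (1 : Fin 4) θ → force M16 (3 : Fin 4) θ →
        force M16 (0 : Fin 4) θ ∨ force M16 (2 : Fin 4) θ) ∧
    (force M16 (1 : Fin 4) (Fm.or (Fm.atom 0) (Fm.atom 1)) ∧
     force M16 (3 : Fin 4) (Fm.or (Fm.atom 0) (Fm.atom 1)) ∧
     ¬ force M16 (0 : Fin 4) (Fm.or (Fm.atom 0) (Fm.atom 1)) ∧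
     ¬ force M16 (2 : Fin 4) (Fm.or (Fm.atom 0) (Fm.atom 1))) ∧
    ¬ ∃ θ : Fm (Fin 2), OnlyNegImp θ ∧
        ∀ (M : KripkeModel (Fin 2)), Fintype M.K → Connected M →
          ∀ k : M.K, (force M k θ ↔ force M k (Fm.or (Fm.atom 0) (Fm.atom 1))) := by
  have key := M16_upsetIsPair_zero_one.force_or_force M16_upsetIsPair_two_three
    M16_val_one_disjoint_three
  obtain ⟨h1, h3, h0, h2⟩ := M16_force_or_atoms
  refine ⟨key, ⟨h1, h3, h0, h2⟩, ?_⟩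
  rintro ⟨θ, hθ, hθ_iff⟩
  have hθ_iff := hθ_iff M16 (inferInstanceAs (Fintype (Fin 4))) M16_connected
  rcases key θ hθ ((hθ_iff (1 : Fin 4)).2 h1) ((hθ_iff (3 : Fin 4)).2 h3) with h | h
  exacts [h0 ((hθ_iff (0 : Fin 4)).1 h), h2 ((hθ_iff (2 : Fin 4)).1 h)]
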